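/- arXiv:2602.11803 — 2 statements merged into one kernel-verified Lean document; each statement's English description precedes it below -/
import Mathlib

section
/- Let n ≥ 2, let E be a real inner product space, and let h : Fin n → Fin n → E be symmetric (h i j = h j i). Then ⟪h 0 0, h 1 1⟫ − ‖h 0 1‖² ≥ ‖∑_i h i i‖² / (2*(n−1)) − (1/2) * ∑_{i,j} ‖h i j‖². -/
open scoped RealInnerProductSpace
open Finset

/-!
Write `a k = h k k`. Merging `a 0` and `a 1` into the single vector `a 0 + a 1` leaves `n - 1`
summands, so Cauchy–Schwarz gives `‖∑ a k‖² ≤ (n - 1) (∑ ‖a k‖² + 2 ⟪a 0, a 1⟫)`. On the other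
hand `∑ ‖h i j‖²` dominates the diagonal terms together with `‖h 0 1‖² = ‖h 1 0‖²`.
-/

theorem norm_sum_sq_le_card_mul_sum_norm_sq {ι E : Type*} [SeminormedAddCommGroup E]
    (s : Finset ι) (v : ι → E) : ‖∑ k ∈ s, v k‖ ^ 2 ≤ #s * ∑ k ∈ s, ‖v k‖ ^ 2 :=
  (pow_le_pow_left₀ (norm_nonneg _) (norm_sum_le s v) 2).trans sq_sum_le_card_mul_sum_sq

theorem norm_sum_sq_le_pred_card_mul {ι E : Type*} [DecidableEq ι] [NormedAddCommGroup E]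
    [InnerProductSpace ℝ E] {s : Finset ι} {i j : ι} (hi : i ∈ s) (hj : j ∈ s) (hij : i ≠ j)
    (v : ι → E) :
    ‖∑ k ∈ s, v k‖ ^ 2 ≤ (#s - 1 : ℝ) * (∑ k ∈ s, ‖v k‖ ^ 2 + 2 * ⟪v i, v j⟫) := by
  have hi' : i ∈ s.erase j := mem_erase.2 ⟨hij, hi⟩
  set t := (s.erase j).erase i
  set w := Function.update v i (v i + v j)
  have hwi : w i = v i + v j := Function.update_self ..
  have hwt : ∀ k ∈ t, w k = v k := fun k hk => Function.update_of_ne (ne_of_mem_erase hk) _ _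
  have hsum : ∑ k ∈ s.erase j, w k = ∑ k ∈ s, v k := by
    rw [← add_sum_erase _ _ hi', sum_congr rfl hwt, ← add_sum_erase s v hj,
      ← add_sum_erase _ v hi', hwi]
    abel
  have hsum_sq : ∑ k ∈ s.erase j, ‖w k‖ ^ 2 = ∑ k ∈ s, ‖v k‖ ^ 2 + 2 * ⟪v i, v j⟫ := by
    rw [← add_sum_erase _ _ hi', sum_congr rfl fun k hk => by rw [hwt k hk],
      ← add_sum_erase s _ hj, ← add_sum_erase _ _ hi', hwi, norm_add_sq_real]
    ring
  have hcard : ((s.erase j).card : ℝ) = #s - 1 := by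
    rw [card_erase_of_mem hj, Nat.cast_pred (card_pos.2 ⟨j, hj⟩)]
  simpa only [hsum, hsum_sq, hcard] using norm_sum_sq_le_card_mul_sum_norm_sq (s.erase j) w

theorem sum_norm_sq_diag_add_two_mul_le {ι E : Type*} [Fintype ι] [DecidableEq ι]
    [SeminormedAddCommGroup E] {h : ι → ι → E} (hsymm : ∀ i j, h i j = h j i) {i j : ι}
    (hij : i ≠ j) :
    ∑ k, ‖h k k‖ ^ 2 + 2 * ‖h i j‖ ^ 2 ≤ ∑ k, ∑ l, ‖h k l‖ ^ 2 := by
  set off : ι → ℝ := fun k => ∑ l ∈ univ.erase k, ‖h k l‖ ^ 2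
  have hoff_nonneg : ∀ k, 0 ≤ off k := fun k => sum_nonneg fun _ _ => sq_nonneg _
  have hoff (k l : ι) (hkl : k ≠ l) : ‖h k l‖ ^ 2 ≤ off k :=
    single_le_sum (f := fun l => ‖h k l‖ ^ 2) (fun _ _ => sq_nonneg _)
      (mem_erase.2 ⟨hkl.symm, mem_univ l⟩)
  have hij_off : off i + off j ≤ ∑ k, off k := by
    rw [← sum_pair hij]
    exact sum_le_sum_of_subset_of_nonneg (subset_univ _) fun k _ _ => hoff_nonneg k
  have hsplit : ∑ k, ∑ l, ‖h k l‖ ^ 2 = ∑ k, ‖h k k‖ ^ 2 + ∑ k, off k := by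
    rw [← sum_add_distrib]
    exact sum_congr rfl fun k _ => (add_sum_erase _ _ (mem_univ k)).symm
  have := hoff i j hij
  have := hoff j i hij.symm
  rw [hsymm j i] at this
  linarith

theorem stmt_3 (n : ℕ) (hn : 2 ≤ n) (E : Type*) [NormedAddCommGroup E]
    [InnerProductSpace ℝ E] (h : Fin n → Fin n → E)
    (hsymm : ∀ i j, h i j = h j i) :
    ⟪h ⟨0, by omega⟩ ⟨0, by omega⟩, h ⟨1, by omega⟩ ⟨1, by omega⟩⟫
        - ‖h ⟨0, by omega⟩ ⟨1, by omega⟩‖ ^ 2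
      ≥ ‖∑ i, h i i‖ ^ 2 / (2 * ((n : ℝ) - 1))
        - (1 / 2) * ∑ i, ∑ j, ‖h i j‖ ^ 2 := by
  set i₀ : Fin n := ⟨0, by omega⟩
  set i₁ : Fin n := ⟨1, by omega⟩
  have hdiag := norm_sum_sq_le_pred_card_mul (mem_univ i₀) (mem_univ i₁) (by simp [i₀, i₁])
    fun k => h k k
  have hall := sum_norm_sq_diag_add_two_mul_le hsymm (i := i₀) (j := i₁) (by simp [i₀, i₁])
  rw [card_univ, Fintype.card_fin] at hdiag
  have hpos : (0 : ℝ) < 2 * ((n : ℝ) - 1) := by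
    have : (2 : ℝ) ≤ n := by exact_mod_cast hn
    linarith
  have hmean : ‖∑ i, h i i‖ ^ 2 / (2 * ((n : ℝ) - 1))
      ≤ (∑ k, ‖h k k‖ ^ 2 + 2 * ⟪h i₀ i₀, h i₁ i₁⟫) / 2 := by
    rw [div_le_iff₀ hpos]
    linarith
  linarith
end

section
/- Let n ≥ 2 and let A be a real symmetric n × n matrix such that (trace A)(A k k) − ∑_j (A k j)² = (trace A)²/4 for every k ∈ Fin n. Then either A = 0, or n = 2 and A is a scalar multiple of the identity (an umbilical point). -/
/-!
Completing the square row by row, `t a_kk - ∑_j a_kj² = t²/4` says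
`(a_kk - t/2)² + ∑_{j ≠ k} a_kj² = 0`, so `A = (t/2) • 1` with `t = trace A`.
Taking traces gives `t = n t / 2`, hence `t = 0` (and `A = 0`) or `n = 2`.
-/

open Matrix

theorem eq_single_of_mul_apply_sub_sum_sq_eq {ι : Type*} [Fintype ι] [DecidableEq ι]
    (v : ι → ℝ) (k : ι) (t : ℝ) (h : t * v k - ∑ j, v j ^ 2 = t ^ 2 / 4) :
    v = Pi.single k (t / 2) := by
  have hsq : ∑ j, (v j - (Pi.single k (t / 2) : ι → ℝ) j) ^ 2 = 0 := by
    have hexpand : ∑ j, (v j - (Pi.single k (t / 2) : ι → ℝ) j) ^ 2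
        = ∑ j, v j ^ 2 - t * v k + t ^ 2 / 4 := by
      simp only [sub_sq, Finset.sum_add_distrib, Finset.sum_sub_distrib, Pi.single_apply,
        mul_ite, ite_pow, mul_zero, ne_eq, OfNat.ofNat_ne_zero,
        not_false_eq_true, zero_pow, Finset.sum_ite_eq', Finset.mem_univ, if_true]
      ring
    linarith
  funext j
  have hj := (Finset.sum_eq_zero_iff_of_nonneg fun j _ => sq_nonneg _).1 hsq j
    (Finset.mem_univ j)
  exact sub_eq_zero.1 (pow_eq_zero_iff two_ne_zero |>.1 hj)

theorem Matrix.eq_smul_one_of_mul_diag_sub_sum_sq_eq {ι : Type*} [Fintype ι] [DecidableEq ι]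
    (A : Matrix ι ι ℝ) (t : ℝ) (h : ∀ k, t * A k k - ∑ j, A k j ^ 2 = t ^ 2 / 4) :
    A = (t / 2) • (1 : Matrix ι ι ℝ) := by
  ext i j
  rw [eq_single_of_mul_apply_sub_sum_sq_eq (A i) i t (h i)]
  simp [Matrix.one_apply, Pi.single_apply, eq_comm]

theorem stmt_14_general (n : ℕ) (A : Matrix (Fin n) (Fin n) ℝ)
    (heq : ∀ k : Fin n,
      Matrix.trace A * A k k - ∑ j, (A k j) ^ 2 = (Matrix.trace A) ^ 2 / 4) :
    A = 0 ∨ (n = 2 ∧ ∃ c : ℝ, A = c • (1 : Matrix (Fin n) (Fin n) ℝ)) := by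
  have hA := A.eq_smul_one_of_mul_diag_sub_sum_sq_eq _ heq
  have htrace : A.trace * ((n : ℝ) - 2) = 0 := by
    have := congrArg Matrix.trace hA
    simp only [trace_smul, trace_one, Fintype.card_fin, smul_eq_mul] at this
    linear_combination -2 * this
  rcases mul_eq_zero.1 htrace with h0 | hn2
  · left
    rw [hA, h0, zero_div, zero_smul]
  · right
    exact ⟨by exact_mod_cast sub_eq_zero.1 hn2, _, hA⟩

theorem stmt_14 (n : ℕ) (hn : 2 ≤ n) (A : Matrix (Fin n) (Fin n) ℝ) (hA : A.IsSymm)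
    (heq : ∀ k : Fin n,
      Matrix.trace A * A k k - ∑ j, (A k j) ^ 2 = (Matrix.trace A) ^ 2 / 4) :
    A = 0 ∨ (n = 2 ∧ ∃ c : ℝ, A = c • (1 : Matrix (Fin n) (Fin n) ℝ)) :=
  stmt_14_general n A heq
end
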